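/- arXiv:1804.05135 — 2 statements merged into one kernel-verified Lean document; each statement's English description precedes it below -/
import Mathlib

section
/- There exists a function c₀ : ℕ → ℚ satisfying c₀(n + t) = c₀(n) for all n ∈ ℕ (i.e., c₀ is periodic with period t) such that ν(n) = n/t + c₀(n) for every n ∈ S. -/
/-- The (finite) set of factorizations of `n` in the numerical semigroup `⟨n₁, n₂, n₃⟩`:
triples `(a₁, a₂, a₃) ∈ ℕ³` with `a₁n₁ + a₂n₂ + a₃n₃ = n`.  (Each coordinate is at most `n`
whenever the generators are positive, so the bounding box `[0,n]³` captures all of them.) -/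
def Zf (n₁ n₂ n₃ n : ℕ) : Finset (ℕ × ℕ × ℕ) :=
  (Finset.range (n + 1) ×ˢ Finset.range (n + 1) ×ˢ Finset.range (n + 1)).filter
    (fun a => a.1 * n₁ + a.2.1 * n₂ + a.2.2 * n₃ = n)

/-- The length of a factorization. -/
def len (a : ℕ × ℕ × ℕ) : ℕ := a.1 + a.2.1 + a.2.2

/-- Membership in the numerical semigroup `⟨n₁, n₂, n₃⟩`. -/
def inS (n₁ n₂ n₃ n : ℕ) : Prop := ∃ a₁ a₂ a₃ : ℕ, a₁ * n₁ + a₂ * n₂ + a₃ * n₃ = n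

/-- `fmul n₁ n₂ n₃ n ℓ` is the number of factorizations of `n` having length `ℓ`. -/
def fmul (n₁ n₂ n₃ n ℓ : ℕ) : ℕ := ((Zf n₁ n₂ n₃ n).filter (fun a => len a = ℓ)).card

/-- The mode frequency `ν(n)`: the maximum, over all lengths `ℓ ∈ ℕ`, of the number of
factorizations of `n` of length `ℓ`. -/
noncomputable def modeFreq (n₁ n₂ n₃ n : ℕ) : ℕ := sSup (Set.range (fmul n₁ n₂ n₃ n))

/-- The set `γ(n)` of mode factorization lengths. -/
def modeSet (n₁ n₂ n₃ n : ℕ) : Set ℕ := {ℓ | fmul n₁ n₂ n₃ n ℓ = modeFreq n₁ n₂ n₃ n}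

/-- The mean factorization length `μ(n)`. -/
def meanLen (n₁ n₂ n₃ n : ℕ) : ℚ :=
  (∑ z ∈ Zf n₁ n₂ n₃ n, (len z : ℚ)) / ((Zf n₁ n₂ n₃ n).card : ℚ)

/-- The lengths of all factorizations of `n`, counted with multiplicity, in nondecreasing
order. -/
def sortedLengths (n₁ n₂ n₃ n : ℕ) : List ℕ :=
  Multiset.sort ((Zf n₁ n₂ n₃ n).val.map len) (· ≤ ·)

/-- The median factorization length `η(n)`: with the lengths listed with multiplicity in
nondecreasing order as `ℓ₁ ≤ ⋯ ≤ ℓ_M`, it is `ℓ_{(M+1)/2}` for odd `M` and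
`(ℓ_{M/2} + ℓ_{M/2+1})/2` for even `M`. -/
def medianLen (n₁ n₂ n₃ n : ℕ) : ℚ :=
  let l := sortedLengths n₁ n₂ n₃ n
  if l.length % 2 = 1 then (l.getD (l.length / 2) 0 : ℚ)
  else ((l.getD (l.length / 2 - 1) 0 : ℚ) + (l.getD (l.length / 2) 0 : ℚ)) / 2

/-!
Put `n₂ - n₁ = δ d₁` and `n₃ - n₂ = δ d₂`, so that `d₁, d₂` are coprime, `t = (d₁ + d₂) n₂`, and
`d₂ n₁ + d₁ n₃ = (d₁ + d₂) n₂` is a trade. Two factorizations of the same element with the same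
length differ by an integer multiple of the trade vector `(d₂, -(d₁ + d₂), d₁)`, so among them at
most one has middle coordinate below `d₁ + d₂`. Adding `d₁ + d₂` to the middle coordinate
therefore maps the factorizations of `n` of length `ℓ` onto all but at most one of those of
`n + t` of length `ℓ + d₁ + d₂`, and a missed one exists: the trade applied to the factorization
with least middle coordinate. Hence `ν(n + t) = ν(n) + 1` on `S`, and `ν(n) - n / t` only depends
on the residue of `n` modulo `t`.
-/

def ZfLen (n₁ n₂ n₃ n ℓ : ℕ) : Finset (ℕ × ℕ × ℕ) :=
  (Zf n₁ n₂ n₃ n).filter (fun a => len a = ℓ)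

section Factorizations

variable {n₁ n₂ n₃ n ℓ : ℕ} {a : ℕ × ℕ × ℕ}

theorem fmul_eq_card_ZfLen : fmul n₁ n₂ n₃ n ℓ = (ZfLen n₁ n₂ n₃ n ℓ).card := rfl

theorem mem_Zf (hn₁ : 0 < n₁) (hn₂ : 0 < n₂) (hn₃ : 0 < n₃) :
    a ∈ Zf n₁ n₂ n₃ n ↔ a.1 * n₁ + a.2.1 * n₂ + a.2.2 * n₃ = n := by
  simp only [Zf, Finset.mem_filter, Finset.mem_product, Finset.mem_range, and_iff_right_iff_imp]
  intro h
  have := Nat.le_mul_of_pos_right a.1 hn₁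
  have := Nat.le_mul_of_pos_right a.2.1 hn₂
  have := Nat.le_mul_of_pos_right a.2.2 hn₃
  omega

theorem mem_ZfLen (hn₁ : 0 < n₁) (hn₂ : 0 < n₂) (hn₃ : 0 < n₃) :
    a ∈ ZfLen n₁ n₂ n₃ n ℓ ↔ a.1 * n₁ + a.2.1 * n₂ + a.2.2 * n₃ = n ∧ len a = ℓ := by
  rw [ZfLen, Finset.mem_filter, mem_Zf hn₁ hn₂ hn₃]

theorem of_mem_ZfLen (ha : a ∈ ZfLen n₁ n₂ n₃ n ℓ) :
    a.1 * n₁ + a.2.1 * n₂ + a.2.2 * n₃ = n ∧ len a = ℓ := by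
  simp only [ZfLen, Zf, Finset.mem_filter] at ha
  exact ⟨ha.1.2, ha.2⟩

theorem inS_add_mul_right (hn : inS n₁ n₂ n₃ n) (k : ℕ) : inS n₁ n₂ n₃ (n + k * n₂) := by
  obtain ⟨a₁, a₂, a₃, h⟩ := hn
  exact ⟨a₁, a₂ + k, a₃, by rw [← h]; ring⟩

end Factorizations

theorem exists_eq_mul_of_trade {n₁ n₂ n₃ d₁ d₂ x₁ x₂ x₃ : ℤ} (h₁₂ : n₁ ≠ n₂)
    (hcop : IsCoprime d₁ d₂) (htrade : d₂ * n₁ + d₁ * n₃ = (d₁ + d₂) * n₂)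
    (hlen : x₁ + x₂ + x₃ = 0) (hval : x₁ * n₁ + x₂ * n₂ + x₃ * n₃ = 0) :
    ∃ k, x₁ = k * d₂ ∧ x₂ = -(k * (d₁ + d₂)) ∧ x₃ = k * d₁ := by
  have hx : x₁ * d₁ = x₃ * d₂ := by
    have : (x₁ * d₁ - x₃ * d₂) * (n₂ - n₁) = 0 := by
      linear_combination d₁ * (n₂ * hlen - hval) + x₃ * htrade
    have := (mul_eq_zero.1 this).resolve_right (sub_ne_zero.2 h₁₂.symm)
    linear_combination this
  obtain ⟨u, v, huv⟩ := hcop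
  refine ⟨u * x₃ + v * x₁, ?_, ?_, ?_⟩
  · linear_combination -x₁ * huv + u * hx
  · linear_combination hlen + x₁ * huv - u * hx + x₃ * huv + v * hx
  · linear_combination -x₃ * huv - v * hx

theorem Nat.Coprime.add_pos {d₁ d₂ : ℕ} (h : d₁.Coprime d₂) : 0 < d₁ + d₂ :=
  Nat.pos_of_ne_zero fun h₀ => by simp_all

section Trade

variable {n₁ n₂ n₃ d₁ d₂ n ℓ : ℕ}

theorem eq_of_mem_ZfLen_of_snd_lt (h₁₂ : n₁ ≠ n₂) (hcop : d₁.Coprime d₂)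
    (htrade : d₂ * n₁ + d₁ * n₃ = (d₁ + d₂) * n₂) {a b : ℕ × ℕ × ℕ}
    (ha : a ∈ ZfLen n₁ n₂ n₃ n ℓ) (hb : b ∈ ZfLen n₁ n₂ n₃ n ℓ)
    (ha₂ : a.2.1 < d₁ + d₂) (hb₂ : b.2.1 < d₁ + d₂) : a = b := by
  obtain ⟨hav, hal⟩ := of_mem_ZfLen ha
  obtain ⟨hbv, hbl⟩ := of_mem_ZfLen hb
  rw [← hbl, len, len] at hal
  zify at hav hbv hal htrade h₁₂
  obtain ⟨k, hk₁, hk₂, hk₃⟩ := exists_eq_mul_of_trade (x₁ := a.1 - b.1) (x₂ := a.2.1 - b.2.1)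
    (x₃ := a.2.2 - b.2.2) h₁₂ (Nat.isCoprime_iff_coprime.2 hcop) htrade (by linear_combination hal)
    (by linear_combination hav - hbv)
  have hk : k = 0 := by
    rcases lt_trichotomy k 0 with hk | hk | hk
    · nlinarith
    · exact hk
    · nlinarith
  subst hk
  ext <;> omega

theorem fmul_add_trade_le (hn₁ : 0 < n₁) (hn₂ : 0 < n₂) (hn₃ : 0 < n₃) (h₁₂ : n₁ ≠ n₂)
    (hcop : d₁.Coprime d₂) (htrade : d₂ * n₁ + d₁ * n₃ = (d₁ + d₂) * n₂) :
    fmul n₁ n₂ n₃ (n + (d₁ + d₂) * n₂) ℓ ≤ fmul n₁ n₂ n₃ n (ℓ - (d₁ + d₂)) + 1 := by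
  classical
  set G := ZfLen n₁ n₂ n₃ (n + (d₁ + d₂) * n₂) ℓ
  have hlow : (G.filter fun a => a.2.1 < d₁ + d₂).card ≤ 1 :=
    Finset.card_le_one.2 fun a ha b hb =>
      eq_of_mem_ZfLen_of_snd_lt h₁₂ hcop htrade (Finset.mem_filter.1 ha).1
        (Finset.mem_filter.1 hb).1 (Finset.mem_filter.1 ha).2 (Finset.mem_filter.1 hb).2
  have hhigh : (G.filter fun a => ¬a.2.1 < d₁ + d₂).card ≤ fmul n₁ n₂ n₃ n (ℓ - (d₁ + d₂)) := by
    refine Finset.card_le_card_of_injOn (fun a => (a.1, a.2.1 - (d₁ + d₂), a.2.2)) ?_ ?_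
    · intro a ha
      obtain ⟨haG, ha₂⟩ := Finset.mem_filter.1 ha
      obtain ⟨hav, hal⟩ := (mem_ZfLen hn₁ hn₂ hn₃).1 haG
      refine (mem_ZfLen hn₁ hn₂ hn₃).2 ⟨?_, ?_⟩
      · zify [not_lt.1 ha₂] at hav ⊢
        linear_combination hav
      · simp only [len] at hal ⊢
        omega
    · intro a ha b hb hab
      have := (Finset.mem_filter.1 ha).2
      have := (Finset.mem_filter.1 hb).2
      simp only [Prod.mk.injEq] at hab
      ext <;> omega
  calc fmul n₁ n₂ n₃ (n + (d₁ + d₂) * n₂) ℓ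
      = (G.filter fun a => a.2.1 < d₁ + d₂).card + (G.filter fun a => ¬a.2.1 < d₁ + d₂).card :=
        (Finset.card_filter_add_card_filter_not _).symm
    _ ≤ 1 + fmul n₁ n₂ n₃ n (ℓ - (d₁ + d₂)) := add_le_add hlow hhigh
    _ = fmul n₁ n₂ n₃ n (ℓ - (d₁ + d₂)) + 1 := add_comm _ _

theorem fmul_add_one_le_add_trade (hn₁ : 0 < n₁) (hn₂ : 0 < n₂) (hn₃ : 0 < n₃)
    (hs : 0 < d₁ + d₂) (htrade : d₂ * n₁ + d₁ * n₃ = (d₁ + d₂) * n₂)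
    (hne : (ZfLen n₁ n₂ n₃ n ℓ).Nonempty) :
    fmul n₁ n₂ n₃ n ℓ + 1 ≤ fmul n₁ n₂ n₃ (n + (d₁ + d₂) * n₂) (ℓ + (d₁ + d₂)) := by
  classical
  set F := ZfLen n₁ n₂ n₃ n ℓ
  set shift : ℕ × ℕ × ℕ → ℕ × ℕ × ℕ := fun a => (a.1, a.2.1 + (d₁ + d₂), a.2.2)
  obtain ⟨b, hbF, hbmin⟩ := F.exists_min_image (fun a => a.2.1) hne
  obtain ⟨hbv, hbl⟩ := (mem_ZfLen hn₁ hn₂ hn₃).1 hbF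
  have hshift : Set.MapsTo shift F (ZfLen n₁ n₂ n₃ (n + (d₁ + d₂) * n₂) (ℓ + (d₁ + d₂))) := by
    intro a ha
    obtain ⟨hav, hal⟩ := (mem_ZfLen hn₁ hn₂ hn₃).1 ha
    refine (mem_ZfLen hn₁ hn₂ hn₃).2 ⟨by simp only [shift]; rw [← hav]; ring, ?_⟩
    simp only [shift, len] at hal ⊢
    omega
  have htraded : (b.1 + d₂, b.2.1, b.2.2 + d₁) ∈
      ZfLen n₁ n₂ n₃ (n + (d₁ + d₂) * n₂) (ℓ + (d₁ + d₂)) := by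
    refine (mem_ZfLen hn₁ hn₂ hn₃).2 ⟨by rw [← hbv, ← htrade]; ring, ?_⟩
    simp only [len] at hbl ⊢
    omega
  have hnew : (b.1 + d₂, b.2.1, b.2.2 + d₁) ∉ F.image shift := by
    simp only [Finset.mem_image, not_exists, not_and]
    intro a ha hab
    have := hbmin a ha
    simp only [shift, Prod.mk.injEq] at hab
    omega
  have hinj : Function.Injective shift := by
    intro a b hab
    simp only [shift, Prod.mk.injEq] at hab
    ext <;> omega
  calc fmul n₁ n₂ n₃ n ℓ + 1 = (insert (b.1 + d₂, b.2.1, b.2.2 + d₁) (F.image shift)).card := by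
        rw [Finset.card_insert_of_notMem hnew, Finset.card_image_of_injective _ hinj]; rfl
    _ ≤ _ := Finset.card_le_card <| Finset.insert_subset htraded <|
        Finset.image_subset_iff.2 fun a ha => hshift ha

end Trade

section ModeFreq

variable {n₁ n₂ n₃ n : ℕ}

theorem bddAbove_range_fmul : BddAbove (Set.range (fmul n₁ n₂ n₃ n)) :=
  ⟨(Zf n₁ n₂ n₃ n).card, by rintro _ ⟨ℓ, rfl⟩; exact Finset.card_filter_le _ _⟩

theorem fmul_le_modeFreq (ℓ : ℕ) : fmul n₁ n₂ n₃ n ℓ ≤ modeFreq n₁ n₂ n₃ n :=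
  le_csSup bddAbove_range_fmul ⟨ℓ, rfl⟩

theorem exists_fmul_eq_modeFreq : ∃ ℓ, fmul n₁ n₂ n₃ n ℓ = modeFreq n₁ n₂ n₃ n :=
  Nat.sSup_mem (Set.range_nonempty _) bddAbove_range_fmul

theorem modeFreq_pos (hn₁ : 0 < n₁) (hn₂ : 0 < n₂) (hn₃ : 0 < n₃) (hn : inS n₁ n₂ n₃ n) :
    0 < modeFreq n₁ n₂ n₃ n := by
  obtain ⟨a₁, a₂, a₃, h⟩ := hn
  have ha : (a₁, a₂, a₃) ∈ ZfLen n₁ n₂ n₃ n (a₁ + a₂ + a₃) := (mem_ZfLen hn₁ hn₂ hn₃).2 ⟨h, rfl⟩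
  exact (Finset.card_pos.2 ⟨_, ha⟩).trans_le (fmul_le_modeFreq _)

theorem modeFreq_add_trade {d₁ d₂ : ℕ} (h₀ : 0 < n₁) (h₁ : n₁ < n₂) (h₂ : n₂ < n₃)
    (hcop : d₁.Coprime d₂) (htrade : d₂ * n₁ + d₁ * n₃ = (d₁ + d₂) * n₂)
    (hn : inS n₁ n₂ n₃ n) :
    modeFreq n₁ n₂ n₃ (n + (d₁ + d₂) * n₂) = modeFreq n₁ n₂ n₃ n + 1 := by
  have hn₂ : 0 < n₂ := h₀.trans h₁
  have hn₃ : 0 < n₃ := hn₂.trans h₂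
  apply le_antisymm
  · obtain ⟨L, hL⟩ := exists_fmul_eq_modeFreq (n₁ := n₁) (n₂ := n₂) (n₃ := n₃)
      (n := n + (d₁ + d₂) * n₂)
    rw [← hL]
    exact (fmul_add_trade_le h₀ hn₂ hn₃ h₁.ne hcop htrade).trans
      (Nat.add_le_add_right (fmul_le_modeFreq _) 1)
  · obtain ⟨ℓ, hℓ⟩ := exists_fmul_eq_modeFreq (n₁ := n₁) (n₂ := n₂) (n₃ := n₃) (n := n)
    have hne : (ZfLen n₁ n₂ n₃ n ℓ).Nonempty :=
      Finset.card_pos.1 (by rw [← fmul_eq_card_ZfLen, hℓ]; exact modeFreq_pos h₀ hn₂ hn₃ hn)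
    rw [← hℓ]
    exact (fmul_add_one_le_add_trade h₀ hn₂ hn₃ hcop.add_pos htrade hne).trans (fmul_le_modeFreq _)

end ModeFreq

theorem exists_coprime_trade {n₁ n₂ n₃ : ℕ} (h₁ : n₁ < n₂) (h₂ : n₂ < n₃) :
    ∃ d₁ d₂ : ℕ, d₁.Coprime d₂ ∧ d₂ * n₁ + d₁ * n₃ = (d₁ + d₂) * n₂ ∧
      n₂ * (n₃ - n₁) / Nat.gcd (n₂ - n₁) (n₃ - n₂) = (d₁ + d₂) * n₂ := by
  have hδ : 0 < Nat.gcd (n₂ - n₁) (n₃ - n₂) := Nat.gcd_pos_of_pos_left _ (by omega)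
  have hcop := Nat.coprime_div_gcd_div_gcd hδ
  set δ := Nat.gcd (n₂ - n₁) (n₃ - n₂)
  obtain ⟨d₁, hd₁⟩ : δ ∣ n₂ - n₁ := Nat.gcd_dvd_left _ _
  obtain ⟨d₂, hd₂⟩ : δ ∣ n₃ - n₂ := Nat.gcd_dvd_right _ _
  rw [hd₁, hd₂, Nat.mul_div_cancel_left _ hδ, Nat.mul_div_cancel_left _ hδ] at hcop
  have h₃₁ : n₃ - n₁ = δ * (d₁ + d₂) := by rw [mul_add, ← hd₁, ← hd₂]; omega
  refine ⟨d₁, d₂, hcop, ?_, ?_⟩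
  · rw [show n₃ = n₂ + δ * d₂ by omega, show n₂ = n₁ + δ * d₁ by omega]
    ring
  · rw [h₃₁, mul_left_comm, Nat.mul_div_cancel_left _ hδ, mul_comm]

theorem exists_periodic_of_map_add_eq_succ {P : ℕ → Prop} {f : ℕ → ℕ} {t : ℕ} (ht : 0 < t)
    (hP : ∀ n, P n → P (n + t)) (hf : ∀ n, P n → f (n + t) = f n + 1) :
    ∃ c : ℕ → ℚ, (∀ n, c (n + t) = c n) ∧ ∀ n, P n → (f n : ℚ) = n / t + c n := by
  have hiter : ∀ n, P n → ∀ k, P (n + t * k) ∧ f (n + t * k) = f n + k := by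
    intro n hn k
    induction k with
    | zero => exact ⟨hn, rfl⟩
    | succ k ih =>
      rw [mul_add_one, ← add_assoc, hf _ ih.1, ih.2]
      exact ⟨hP _ ih.1, rfl⟩
  let rep n := sInf {m | P m ∧ m % t = n % t}
  refine ⟨fun n => f (rep n) - (rep n : ℚ) / t, fun n => by simp only [rep, Nat.add_mod_right],
    fun n hn => ?_⟩
  have hmem : P (rep n) ∧ rep n % t = n % t :=
    Nat.sInf_mem (s := {m | P m ∧ m % t = n % t}) ⟨n, hn, rfl⟩
  have hle : rep n ≤ n := Nat.sInf_le ⟨hn, rfl⟩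
  obtain ⟨k, hk⟩ := (Nat.modEq_iff_dvd' hle).1 hmem.2
  have hn' : n = rep n + t * k := by omega
  have hfn := (hiter _ hmem.1 k).2
  rw [← hn'] at hfn
  rw [hfn, show (n : ℚ) = rep n + t * k by exact_mod_cast hn']
  push_cast
  field_simp
  ring

theorem mode_freq_quasilinear_general (n₁ n₂ n₃ : ℕ) (h₀ : 0 < n₁) (h₁ : n₁ < n₂) (h₂ : n₂ < n₃)
    (δ t : ℕ) (hδ : δ = Nat.gcd (n₂ - n₁) (n₃ - n₂)) (ht : t = n₂ * (n₃ - n₁) / δ) :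
    ∃ c₀ : ℕ → ℚ, (∀ n : ℕ, c₀ (n + t) = c₀ n) ∧
      ∀ n : ℕ, inS n₁ n₂ n₃ n →
        (modeFreq n₁ n₂ n₃ n : ℚ) = (n : ℚ) / (t : ℚ) + c₀ n := by
  obtain ⟨d₁, d₂, hcop, htrade, hts⟩ := exists_coprime_trade h₁ h₂
  rw [hδ, hts] at ht
  subst ht
  exact exists_periodic_of_map_add_eq_succ (Nat.mul_pos hcop.add_pos (h₀.trans h₁))
    (fun n hn => inS_add_mul_right hn _)
    (fun n hn => modeFreq_add_trade h₀ h₁ h₂ hcop htrade hn)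

/-- There is a t-periodic function c₀ : ℕ → ℚ with ν(n) = n/t + c₀(n) for all n ∈ S. -/
theorem mode_freq_quasilinear (n₁ n₂ n₃ : ℕ) (h₀ : 0 < n₁) (h₁ : n₁ < n₂) (h₂ : n₂ < n₃)
    (hg : Nat.gcd n₁ (Nat.gcd n₂ n₃) = 1)
    (δ t : ℕ) (hδ : δ = Nat.gcd (n₂ - n₁) (n₃ - n₂)) (ht : t = n₂ * (n₃ - n₁) / δ) :
    ∃ c₀ : ℕ → ℚ, (∀ n : ℕ, c₀ (n + t) = c₀ n) ∧
      ∀ n : ℕ, inS n₁ n₂ n₃ n →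
        (modeFreq n₁ n₂ n₃ n : ℚ) = (n : ℚ) / (t : ℚ) + c₀ n :=
  mode_freq_quasilinear_general n₁ n₂ n₃ h₀ h₁ h₂ δ t hδ ht
end

section
/- Let s = δ·t·n₁n₂n₃ and fix r ∈ S. Then the differences of mean factorization lengths along the shifted subsequence are bounded: there exists a constant C such that |μ(ks + r) − μ(ks)| ≤ C for all integers k ≥ 1. -/
/-!
Adding a fixed factorization `b` of `r` embeds `Z(n)` into `Z(n + r)` and raises every length
by `len b ≤ r`. A factorization of `n + r` outside the image has some coordinate below the
corresponding coordinate of `b`, and is determined by that coordinate together with one other, so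
there are only `O(n)` of them, each of length at most `n + r`. Hence
`|μ(n + r) - μ(n)| ≤ r + O(n²) / #Z(n)`. For `n = q n₁n₂n₃` the factorizations
`(i n₂n₃, j n₁n₃, (q - i - j) n₁n₂)` show `#Z(n) ≥ (q/2 + 1)²`, so the difference stays bounded
along all multiples of `n₁n₂n₃`, in particular along the multiples of `s`.
-/

theorem abs_div_sub_div_le {K : Type*} [Field K] [LinearOrder K] [IsStrictOrderedRing K]
    {S₀ SE L N M e : K} (hM : 0 < M) (he : 0 ≤ e) (hL : 0 ≤ L) (hS₀ : 0 ≤ S₀)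
    (hS₀N : S₀ ≤ M * N) (hSE : 0 ≤ SE) (hSEN : SE ≤ e * N) :
    |(S₀ + M * L + SE) / (M + e) - S₀ / M| ≤ L + e * N / M := by
  have hMe : 0 < M + e := by linarith
  have hμ : 0 ≤ S₀ / M ∧ S₀ / M ≤ N :=
    ⟨div_nonneg hS₀ hM.le, (div_le_iff₀' hM).2 hS₀N⟩
  have hdiff : (S₀ + M * L + SE) / (M + e) - S₀ / M = (M * L + SE - S₀ / M * e) / (M + e) := by
    field_simp
    ring
  have hnum : |M * L + SE - S₀ / M * e| ≤ M * L + e * N := by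
    rw [abs_le]
    constructor <;> nlinarith
  calc |(S₀ + M * L + SE) / (M + e) - S₀ / M|
      ≤ (M * L + e * N) / (M + e) := by
        rw [hdiff, abs_div, abs_of_pos hMe]
        gcongr
    _ ≤ M * L / M + e * N / M := by
        rw [add_div]
        gcongr <;> linarith
    _ = L + e * N / M := by rw [mul_div_cancel_left₀ _ hM.ne']

open Finset in
theorem abs_sum_div_card_sub_sum_div_card_le {ι κ : Type*} [DecidableEq κ]
    {s : Finset ι} {t : Finset κ} {f : ι → κ} (hf : Set.InjOn f s) (hst : s.image f ⊆ t)
    {g : ι → ℚ} {h : κ → ℚ} {L N : ℚ} (hL : 0 ≤ L) (hg : ∀ i ∈ s, 0 ≤ g i)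
    (hh : ∀ x ∈ t, 0 ≤ h x ∧ h x ≤ N) (hhf : ∀ i ∈ s, h (f i) = g i + L) (hs : s.Nonempty) :
    |(∑ x ∈ t, h x) / #t - (∑ i ∈ s, g i) / #s| ≤ L + #(t \ s.image f) * N / #s := by
  have hsum : ∑ x ∈ t, h x = ∑ i ∈ s, g i + #s * L + ∑ x ∈ t \ s.image f, h x := by
    rw [← sum_sdiff hst, sum_image hf, sum_congr rfl hhf, sum_add_distrib, sum_const,
      nsmul_eq_mul]
    ring
  have hcard : (#t : ℚ) = #s + #(t \ s.image f) := by
    rw [← card_sdiff_add_card_eq_card hst, card_image_of_injOn hf]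
    push_cast
    ring
  rw [hsum, hcard]
  refine abs_div_sub_div_le (by exact_mod_cast hs.card_pos) (by positivity) hL
    (sum_nonneg hg) ?_ (sum_nonneg fun x hx => (hh x (sdiff_subset hx)).1) ?_
  · rw [← nsmul_eq_mul]
    refine sum_le_card_nsmul _ _ _ fun i hi => ?_
    have := (hh _ (hst (mem_image_of_mem f hi))).2
    linarith [hhf i hi]
  · rw [← nsmul_eq_mul]
    exact sum_le_card_nsmul _ _ _ fun x hx => (hh x (sdiff_subset hx)).2

theorem card_filter_fst_lt_le {α : Type*} {s : Finset α} {p : α → ℕ × ℕ}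
    (hp : Set.InjOn p s) {N : ℕ} (hN : ∀ a ∈ s, (p a).2 ≤ N) (c : ℕ) :
    (s.filter fun a => (p a).1 < c).card ≤ c * (N + 1) := by
  calc (s.filter fun a => (p a).1 < c).card ≤ (Finset.range c ×ˢ Finset.range (N + 1)).card := by
        refine Finset.card_le_card_of_injOn p (fun a ha => ?_)
          (hp.mono (Finset.coe_subset.2 (Finset.filter_subset _ _)))
        rw [Finset.mem_coe, Finset.mem_filter] at ha
        rw [Finset.mem_coe, Finset.mem_product, Finset.mem_range, Finset.mem_range]
        exact ⟨ha.2, Nat.lt_succ_of_le (hN a ha.1)⟩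
    _ = c * (N + 1) := by simp

section Factorizations

variable {n₁ n₂ n₃ : ℕ}

theorem mem_Zf_iff (h₁ : 0 < n₁) (h₂ : 0 < n₂) (h₃ : 0 < n₃) {n : ℕ} {a : ℕ × ℕ × ℕ} :
    a ∈ Zf n₁ n₂ n₃ n ↔ a.1 * n₁ + a.2.1 * n₂ + a.2.2 * n₃ = n := by
  simp only [Zf, Finset.mem_filter, Finset.mem_product, Finset.mem_range, and_iff_right_iff_imp]
  intro h
  have := Nat.le_mul_of_pos_right a.1 h₁
  have := Nat.le_mul_of_pos_right a.2.1 h₂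
  have := Nat.le_mul_of_pos_right a.2.2 h₃
  omega

theorem eq_of_mem_Zf {n : ℕ} {a : ℕ × ℕ × ℕ} (ha : a ∈ Zf n₁ n₂ n₃ n) :
    a.1 * n₁ + a.2.1 * n₂ + a.2.2 * n₃ = n :=
  (Finset.mem_filter.1 ha).2

theorem le_of_mem_Zf {n : ℕ} {a : ℕ × ℕ × ℕ} (ha : a ∈ Zf n₁ n₂ n₃ n) :
    a.1 ≤ n ∧ a.2.1 ≤ n ∧ a.2.2 ≤ n := by
  simp only [Zf, Finset.mem_filter, Finset.mem_product, Finset.mem_range] at ha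
  omega

theorem len_le_of_mem_Zf (h₁ : 0 < n₁) (h₂ : 0 < n₂) (h₃ : 0 < n₃) {n : ℕ}
    {a : ℕ × ℕ × ℕ} (ha : a ∈ Zf n₁ n₂ n₃ n) : len a ≤ n := by
  rw [mem_Zf_iff h₁ h₂ h₃] at ha
  have := Nat.le_mul_of_pos_right a.1 h₁
  have := Nat.le_mul_of_pos_right a.2.1 h₂
  have := Nat.le_mul_of_pos_right a.2.2 h₃
  unfold len
  omega

theorem injOn_fst_snd_fst_Zf (h₃ : 0 < n₃) (n : ℕ) :
    Set.InjOn (fun a : ℕ × ℕ × ℕ => (a.1, a.2.1)) (Zf n₁ n₂ n₃ n) := by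
  intro a ha a' ha' h
  obtain ⟨h1, h2⟩ := Prod.mk.inj h
  have ha := eq_of_mem_Zf ha
  have ha' := eq_of_mem_Zf ha'
  rw [h1, h2] at ha
  have := Nat.eq_of_mul_eq_mul_right h₃ (by omega : a.2.2 * n₃ = a'.2.2 * n₃)
  exact Prod.ext h1 (Prod.ext h2 this)

theorem injOn_snd_snd_fst_Zf (h₂ : 0 < n₂) (n : ℕ) :
    Set.InjOn (fun a : ℕ × ℕ × ℕ => (a.2.2, a.1)) (Zf n₁ n₂ n₃ n) := by
  intro a ha a' ha' h
  obtain ⟨h3, h1⟩ := Prod.mk.inj h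
  have ha := eq_of_mem_Zf ha
  have ha' := eq_of_mem_Zf ha'
  rw [h1, h3] at ha
  have := Nat.eq_of_mul_eq_mul_right h₂ (by omega : a.2.1 * n₂ = a'.2.1 * n₂)
  exact Prod.ext h1 (Prod.ext this h3)

theorem add_mem_Zf (h₁ : 0 < n₁) (h₂ : 0 < n₂) (h₃ : 0 < n₃) {n r : ℕ} {a b : ℕ × ℕ × ℕ}
    (ha : a ∈ Zf n₁ n₂ n₃ n) (hb : b ∈ Zf n₁ n₂ n₃ r) : a + b ∈ Zf n₁ n₂ n₃ (n + r) := by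
  rw [mem_Zf_iff h₁ h₂ h₃] at ha hb ⊢
  simp only [Prod.fst_add, Prod.snd_add]
  linear_combination ha + hb

theorem len_add (a b : ℕ × ℕ × ℕ) : len (a + b) = len a + len b := by
  simp only [len, Prod.fst_add, Prod.snd_add]
  ring

theorem card_Zf_sdiff_image_add_le (h₁ : 0 < n₁) (h₂ : 0 < n₂) (h₃ : 0 < n₃) {r : ℕ}
    {b : ℕ × ℕ × ℕ} (hb : b ∈ Zf n₁ n₂ n₃ r) (n : ℕ) :
    (Zf n₁ n₂ n₃ (n + r) \ (Zf n₁ n₂ n₃ n).image (· + b)).card ≤ len b * (n + r + 1) := by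
  set B := Zf n₁ n₂ n₃ (n + r)
  have hsub : B \ (Zf n₁ n₂ n₃ n).image (· + b) ⊆
      (B.filter fun a => a.1 < b.1) ∪ (B.filter fun a => a.2.1 < b.2.1) ∪
        (B.filter fun a => a.2.2 < b.2.2) := by
    intro a ha
    obtain ⟨haB, hnot⟩ := Finset.mem_sdiff.1 ha
    simp only [Finset.mem_union, Finset.mem_filter, haB, true_and]
    by_contra! hba
    obtain ⟨⟨h1, h2⟩, h3⟩ := hba
    have hba : b ≤ a := Prod.mk_le_mk.2 ⟨h1, h2, h3⟩
    refine hnot (Finset.mem_image.2 ⟨a - b, ?_, tsub_add_cancel_of_le hba⟩)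
    have ha := eq_of_mem_Zf haB
    have hb := eq_of_mem_Zf hb
    rw [mem_Zf_iff h₁ h₂ h₃]
    simp only [Prod.fst_sub, Prod.snd_sub]
    zify [h1, h2, h3] at ha hb ⊢
    linear_combination ha - hb
  calc _ ≤ _ := Finset.card_le_card hsub
    _ ≤ _ := Finset.card_union_le _ _
    _ ≤ _ := Nat.add_le_add_right (Finset.card_union_le _ _) _
    _ ≤ b.1 * (n + r + 1) + b.2.1 * (n + r + 1) + b.2.2 * (n + r + 1) := by
      gcongr
      · exact card_filter_fst_lt_le (injOn_fst_snd_fst_Zf h₃ _)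
          (fun a ha => (le_of_mem_Zf ha).2.1) _
      · exact card_filter_fst_lt_le
          (Prod.swap_injective.comp_injOn (injOn_fst_snd_fst_Zf h₃ _))
          (fun a ha => (le_of_mem_Zf ha).1) _
      · exact card_filter_fst_lt_le (injOn_snd_snd_fst_Zf h₂ _)
          (fun a ha => (le_of_mem_Zf ha).1) _
    _ = len b * (n + r + 1) := by unfold len; ring

theorem sq_half_succ_le_card_Zf (h₁ : 0 < n₁) (h₂ : 0 < n₂) (h₃ : 0 < n₃) (q : ℕ) :
    (q / 2 + 1) ^ 2 ≤ (Zf n₁ n₂ n₃ (q * (n₁ * n₂ * n₃))).card := by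
  set m := q / 2 + 1
  calc m ^ 2 = (Finset.range m ×ˢ Finset.range m).card := by simp [sq]
    _ ≤ _ := by
      refine Finset.card_le_card_of_injOn
        (fun p => (p.1 * (n₂ * n₃), p.2 * (n₁ * n₃), (q - p.1 - p.2) * (n₁ * n₂)))
        (fun p hp => ?_) (fun p _ p' _ h => ?_)
      · obtain ⟨i, j⟩ := p
        rw [Finset.mem_coe, Finset.mem_product, Finset.mem_range, Finset.mem_range] at hp
        obtain ⟨l, rfl⟩ : ∃ l, q = i + j + l := ⟨q - i - j, by omega⟩
        rw [Finset.mem_coe, mem_Zf_iff h₁ h₂ h₃]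
        dsimp only
        rw [show i + j + l - i - j = l by omega]
        ring
      · simp only [Prod.mk.injEq] at h
        obtain ⟨h1, h2, -⟩ := h
        exact Prod.ext (Nat.eq_of_mul_eq_mul_right (by positivity) h1)
          (Nat.eq_of_mul_eq_mul_right (by positivity) h2)

theorem abs_meanLen_add_sub_meanLen_le (h₁ : 0 < n₁) (h₂ : 0 < n₂) (h₃ : 0 < n₃) {n r : ℕ}
    {b : ℕ × ℕ × ℕ} (hb : b ∈ Zf n₁ n₂ n₃ r) (hn : (Zf n₁ n₂ n₃ n).Nonempty) :
    |meanLen n₁ n₂ n₃ (n + r) - meanLen n₁ n₂ n₃ n| ≤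
      len b + (Zf n₁ n₂ n₃ (n + r) \ (Zf n₁ n₂ n₃ n).image (· + b)).card * ((n + r : ℕ) : ℚ) /
        (Zf n₁ n₂ n₃ n).card :=
  abs_sum_div_card_sub_sum_div_card_le (add_left_injective b).injOn
    (Finset.image_subset_iff.2 fun _ ha => add_mem_Zf h₁ h₂ h₃ ha hb) (Nat.cast_nonneg _)
    (fun _ _ => Nat.cast_nonneg _)
    (fun _ ha => ⟨Nat.cast_nonneg _, Nat.cast_le.2 (len_le_of_mem_Zf h₁ h₂ h₃ ha)⟩)
    (fun a _ => by rw [len_add, Nat.cast_add]) hn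

theorem exists_abs_meanLen_mul_add_sub_le (h₁ : 0 < n₁) (h₂ : 0 < n₂) (h₃ : 0 < n₃) {r : ℕ}
    (hr : inS n₁ n₂ n₃ r) :
    ∃ C : ℚ, ∀ q : ℕ,
      |meanLen n₁ n₂ n₃ (q * (n₁ * n₂ * n₃) + r) - meanLen n₁ n₂ n₃ (q * (n₁ * n₂ * n₃))| ≤ C := by
  obtain ⟨b₁, b₂, b₃, hb⟩ := hr
  have hb : (b₁, b₂, b₃) ∈ Zf n₁ n₂ n₃ r := (mem_Zf_iff h₁ h₂ h₃).2 hb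
  set P := n₁ * n₂ * n₃
  refine ⟨r + 4 * r * (P + r + 1) ^ 2, fun q => ?_⟩
  set n := q * P
  set M := (Zf n₁ n₂ n₃ n).card
  set e := (Zf n₁ n₂ n₃ (n + r) \ (Zf n₁ n₂ n₃ n).image (· + (b₁, b₂, b₃))).card
  have hM : (q + 1) ^ 2 ≤ 4 * M :=
    calc (q + 1) ^ 2 ≤ (2 * (q / 2 + 1)) ^ 2 := by gcongr; omega
      _ = 4 * (q / 2 + 1) ^ 2 := by ring
      _ ≤ 4 * M := Nat.mul_le_mul_left _ (sq_half_succ_le_card_Zf h₁ h₂ h₃ q)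
  have hMpos : 0 < M := by
    have : 0 < (q + 1) ^ 2 := by positivity
    omega
  have hlen : len (b₁, b₂, b₃) ≤ r := len_le_of_mem_Zf h₁ h₂ h₃ hb
  have he : e ≤ r * (n + r + 1) :=
    (card_Zf_sdiff_image_add_le h₁ h₂ h₃ hb n).trans (Nat.mul_le_mul_right _ hlen)
  have hn : n + r + 1 ≤ (q + 1) * (P + r + 1) :=
    calc n + r + 1 ≤ n + (q * (r + 1) + (P + r + 1)) := by omega
      _ = (q + 1) * (P + r + 1) := by ring
  have hkey : e * (n + r) ≤ 4 * r * (P + r + 1) ^ 2 * M :=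
    calc e * (n + r) ≤ r * ((q + 1) * (P + r + 1)) * ((q + 1) * (P + r + 1)) :=
          Nat.mul_le_mul (he.trans (Nat.mul_le_mul_left _ hn)) (by omega)
      _ = r * (P + r + 1) ^ 2 * (q + 1) ^ 2 := by ring
      _ ≤ r * (P + r + 1) ^ 2 * (4 * M) := Nat.mul_le_mul_left _ hM
      _ = 4 * r * (P + r + 1) ^ 2 * M := by ring
  have hMQ : (0 : ℚ) < M := by exact_mod_cast hMpos
  calc _ ≤ (len (b₁, b₂, b₃) : ℚ) + e * ((n + r : ℕ) : ℚ) / M :=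
        abs_meanLen_add_sub_meanLen_le h₁ h₂ h₃ hb (Finset.card_pos.1 hMpos)
    _ ≤ r + 4 * r * (P + r + 1) ^ 2 := by
        refine add_le_add (by exact_mod_cast hlen) ((div_le_iff₀ hMQ).2 ?_)
        exact_mod_cast hkey

end Factorizations

theorem mean_shift_bounded_general (n₁ n₂ n₃ : ℕ) (h₀ : 0 < n₁) (h₁ : n₁ < n₂) (h₂ : n₂ < n₃)
    (δ t : ℕ)
    (s : ℕ) (hs : s = δ * t * n₁ * n₂ * n₃) (r : ℕ) (hr : inS n₁ n₂ n₃ r) :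
    ∃ C : ℚ, ∀ k : ℕ, 1 ≤ k →
      |meanLen n₁ n₂ n₃ (k * s + r) - meanLen n₁ n₂ n₃ (k * s)| ≤ C := by
  obtain ⟨C, hC⟩ := exists_abs_meanLen_mul_add_sub_le h₀ (by omega) (by omega) hr
  refine ⟨C, fun k _ => ?_⟩
  rw [show k * s = k * δ * t * (n₁ * n₂ * n₃) by rw [hs]; ring]
  exact hC _

/-- For fixed r ∈ S, the differences |μ(ks + r) − μ(ks)| are bounded over k ≥ 1. -/
theorem mean_shift_bounded (n₁ n₂ n₃ : ℕ) (h₀ : 0 < n₁) (h₁ : n₁ < n₂) (h₂ : n₂ < n₃)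
    (hg : Nat.gcd n₁ (Nat.gcd n₂ n₃) = 1)
    (δ t : ℕ) (hδ : δ = Nat.gcd (n₂ - n₁) (n₃ - n₂)) (ht : t = n₂ * (n₃ - n₁) / δ)
    (s : ℕ) (hs : s = δ * t * n₁ * n₂ * n₃) (r : ℕ) (hr : inS n₁ n₂ n₃ r) :
    ∃ C : ℚ, ∀ k : ℕ, 1 ≤ k →
      |meanLen n₁ n₂ n₃ (k * s + r) - meanLen n₁ n₂ n₃ (k * s)| ≤ C :=
  mean_shift_bounded_general n₁ n₂ n₃ h₀ h₁ h₂ δ t s hs r hr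
end
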